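/- arXiv:2204.07129 — 7 statements merged into one kernel-verified Lean document; each statement's English description precedes it below -/
import Mathlib

section
/- Let G be a connected graph containing a universal vertex, i.e. a vertex adjacent to every other vertex of G (equivalently, G has radius at most 1). Then G has a matching cut if and only if G has a vertex of degree 1. -/
/-- `M` is a matching cut of `G`: a set of edges of `G`, no two of which share an
end-vertex, whose removal disconnects `G`. -/
def IsMatchingCut {V : Type*} (G : SimpleGraph V) (M : Set (Sym2 V)) : Prop :=
  M ⊆ G.edgeSet ∧
  (∀ e ∈ M, ∀ f ∈ M, e ≠ f → ∀ v : V, v ∈ e → v ∉ f) ∧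
  ¬ (G.deleteEdges M).Connected

/-- A connected graph with a universal vertex has a matching cut iff it has a vertex of
degree `1`. -/
theorem matchingCut_iff_degree_one_of_universal_vertex {V : Type*} [Fintype V]
    (G : SimpleGraph V) [DecidableRel G.Adj] (hG : G.Connected)
    (hu : ∃ u : V, ∀ v : V, v ≠ u → G.Adj u v) :
    (∃ M : Set (Sym2 V), IsMatchingCut G M) ↔ ∃ v : V, G.degree v = 1 := by
  obtain ⟨u, hu⟩ := hu
  constructor
  · rintro ⟨M, hME, hMatch, hNC⟩
    have hne : Nonempty V := hG.nonempty
    have hex : ∃ v, ¬ (G.deleteEdges M).Reachable u v := by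
      by_contra h
      push_neg at h
      exact hNC (SimpleGraph.Connected.mk fun x y => (h x).symm.trans (h y))
    obtain ⟨v, hv⟩ := hex
    have hvu : v ≠ u := by rintro rfl; exact hv (SimpleGraph.Reachable.refl v)
    have hadj : G.Adj u v := hu v hvu
    have huvM : s(u, v) ∈ M := by
      by_contra h
      exact hv ((SimpleGraph.deleteEdges_adj).mpr ⟨hadj, h⟩).reachable
    have key : ∀ w, G.Adj v w → w = u := by
      intro w hvw
      by_contra hwu
      have hwv : w ≠ v := hvw.ne'
      have h1 : s(v, w) ∉ M := by
        intro hmem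
        have hne2 : s(u, v) ≠ s(v, w) := by
          rw [Ne, Sym2.eq_iff]
          rintro (⟨h1, h2⟩ | ⟨h1, h2⟩)
          · exact hvu h1.symm
          · exact hwu h1.symm
        exact hMatch _ huvM _ hmem hne2 v (by simp) (by simp)
      have h2 : s(u, w) ∉ M := by
        intro hmem
        have hne2 : s(u, v) ≠ s(u, w) := by
          rw [Ne, Sym2.eq_iff]
          rintro (⟨h1, h2⟩ | ⟨h1, h2⟩)
          · exact hwv h2.symm
          · exact hvu h2
        exact hMatch _ huvM _ hmem hne2 u (by simp) (by simp)
      have hvw' : (G.deleteEdges M).Adj v w :=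
        (SimpleGraph.deleteEdges_adj).mpr ⟨hvw, h1⟩
      have huw' : (G.deleteEdges M).Adj u w :=
        (SimpleGraph.deleteEdges_adj).mpr ⟨hu w hwu, h2⟩
      exact hv (huw'.reachable.trans hvw'.symm.reachable)
    refine ⟨v, ?_⟩
    have hns : G.neighborFinset v = {u} := by
      ext w
      simp only [SimpleGraph.mem_neighborFinset, Finset.mem_singleton]
      exact ⟨key w, fun h => h ▸ hadj.symm⟩
    rw [← SimpleGraph.card_neighborFinset_eq_degree, hns, Finset.card_singleton]
  · rintro ⟨v, hv⟩
    rw [← SimpleGraph.card_neighborFinset_eq_degree] at hv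
    obtain ⟨w, hw⟩ := Finset.card_eq_one.mp hv
    have hvw : G.Adj v w := by
      rw [← SimpleGraph.mem_neighborFinset, hw]; simp
    refine ⟨{s(v, w)}, ?_, ?_, ?_⟩
    · intro e he
      rw [Set.mem_singleton_iff] at he
      subst he
      exact hvw
    · rintro e he f hf hne
      rw [Set.mem_singleton_iff] at he hf
      subst he; subst hf
      exact absurd rfl hne
    · intro hc
      have hiso : ∀ x, ¬ (G.deleteEdges {s(v, w)}).Adj v x := by
        intro x hx
        rw [SimpleGraph.deleteEdges_adj] at hx
        have hxm : x ∈ G.neighborFinset v := by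
          rw [SimpleGraph.mem_neighborFinset]; exact hx.1
        rw [hw, Finset.mem_singleton] at hxm
        subst hxm
        exact hx.2 rfl
      obtain ⟨p⟩ := hc.preconnected v w
      cases p with
      | nil => exact hvw.ne rfl
      | cons h _ => exact hiso _ h
end

section
/- Let D be a dominating set of a connected graph G, and let c be a valid red-blue colouring of G in which every vertex of D receives the same colour. Then for every connected component C of the induced subgraph G − D, the vertex set of C is monochromatic under c. -/
/-- A red-blue colouring (`true` = red, `false` = blue) is valid if every vertex has at
most one neighbour of the opposite colour and both colours are used. -/
def IsValidColoring {V : Type*} (G : SimpleGraph V) (c : V → Bool) : Prop :=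
  (∀ v : V, {w : V | G.Adj v w ∧ c w ≠ c v}.Subsingleton) ∧
  (∃ u, c u = true) ∧ (∃ u, c u = false)

/-- If `D` is a dominating set of a connected graph `G` and `c` is a valid red-blue
colouring in which `D` is monochromatic, then the vertex set of every connected
component of `G - D` is monochromatic. -/
theorem components_monochromatic_of_dominating_monochromatic {V : Type*}
    (G : SimpleGraph V) (hG : G.Connected) (D : Set V)
    (hdom : ∀ v : V, v ∉ D → ∃ u ∈ D, G.Adj v u)
    (c : V → Bool) (hc : IsValidColoring G c)
    (hmono : ∀ u ∈ D, ∀ w ∈ D, c u = c w) :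
    ∀ (C : (G.induce (Dᶜ : Set V)).ConnectedComponent),
      ∀ x ∈ C.supp, ∀ y ∈ C.supp, c (x : V) = c (y : V) := by
  obtain ⟨hsub, -, -⟩ := hc
  have key : ∀ a b : ↥(Dᶜ : Set V), (G.induce (Dᶜ : Set V)).Adj a b →
      c (a : V) = c (b : V) := by
    rintro ⟨a, ha⟩ ⟨b, hb⟩ hab
    simp only [SimpleGraph.comap_adj, Function.Embedding.coe_subtype] at hab
    by_contra hne
    simp only at hne
    simp only [Set.mem_compl_iff] at ha hb
    obtain ⟨u, hu, hau⟩ := hdom a ha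
    obtain ⟨w, hw, hbw⟩ := hdom b hb
    by_cases hca : c a = c u
    · have hcw : c w = c u := hmono w hw u hu
      have h1 : a ∈ {x | G.Adj b x ∧ c x ≠ c b} := ⟨hab.symm, hne⟩
      have h2 : w ∈ {x | G.Adj b x ∧ c x ≠ c b} := by
        refine ⟨hbw, ?_⟩
        rw [hcw, ← hca]
        exact hne
      exact ha (hsub b h1 h2 ▸ hw)
    · have h1 : u ∈ {x | G.Adj a x ∧ c x ≠ c a} := ⟨hau, fun h => hca h.symm⟩
      have h2 : b ∈ {x | G.Adj a x ∧ c x ≠ c a} := ⟨hab, fun h => hne h.symm⟩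
      exact hb ((hsub a h1 h2).symm ▸ hu)
  intro C x hx y hy
  have hr : (G.induce (Dᶜ : Set V)).Reachable x y := by
    rw [SimpleGraph.ConnectedComponent.mem_supp_iff] at hx hy
    exact SimpleGraph.ConnectedComponent.exact (hx.trans hy.symm)
  clear hx hy
  obtain ⟨p⟩ := hr
  induction p with
  | nil => rfl
  | cons h p ih => exact (key _ _ h).trans ih
end

section
/- Let D be a dominating set of a connected graph G. Then G has a valid red-blue colouring in which every vertex of D is coloured red if and only if there exists a connected component C of the induced subgraph G − D such that the red-blue colouring that colours every vertex of C blue and every other vertex of G red is valid. -/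
/-- For a dominating set `D` of a connected graph `G`: `G` has a valid red-blue colouring
with all of `D` red iff there is a connected component `C` of `G - D` such that colouring
`C` blue and everything else red is valid. -/
theorem validColoring_dominating_red_iff_component {V : Type*}
    (G : SimpleGraph V) (hG : G.Connected) (D : Set V)
    (hdom : ∀ v : V, v ∉ D → ∃ u ∈ D, G.Adj v u) :
    (∃ c : V → Bool, IsValidColoring G c ∧ ∀ v ∈ D, c v = true) ↔
      ∃ (C : (G.induce (Dᶜ : Set V)).ConnectedComponent) (c : V → Bool),
        (∀ v : V, c v = false ↔ v ∈ (Subtype.val '' C.supp)) ∧ IsValidColoring G c := by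
  classical
  constructor
  · rintro ⟨c, ⟨hsub, ⟨r, hr⟩, ⟨b, hb⟩⟩, hD⟩
    have hbD : b ∉ D := by
      intro h
      rw [hD b h] at hb
      exact absurd hb (by simp)
    -- key step: blue propagates along edges of `G - D`
    have step : ∀ (u w : ↥(Dᶜ : Set V)), (G.induce (Dᶜ : Set V)).Adj u w →
        c u.val = false → c w.val = false := by
      intro u w huw hcu
      by_contra hcw
      have hcw' : c w.val = true := by cases h : c w.val <;> simp_all
      obtain ⟨d, hdD, hadj⟩ := hdom u.val u.2
      have hcd : c d = true := hD d hdD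
      have hGadj : G.Adj u.val w.val := huw
      have h1 : w.val ∈ {x | G.Adj u.val x ∧ c x ≠ c u.val} :=
        ⟨hGadj, by simp [hcw', hcu]⟩
      have h2 : d ∈ {x | G.Adj u.val x ∧ c x ≠ c u.val} := ⟨hadj, by simp [hcd, hcu]⟩
      exact w.2 ((hsub u.val h1 h2) ▸ hdD)
    have reachblue : ∀ u x : ↥(Dᶜ : Set V), (G.induce (Dᶜ : Set V)).Reachable u x →
        c u.val = false → c x.val = false := by
      intro u x hrch
      obtain ⟨p⟩ := hrch
      induction p with
      | nil => exact id
      | cons h p ih => exact fun hcu => ih (step _ _ h hcu)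
    set b' : ↥(Dᶜ : Set V) := ⟨b, hbD⟩ with hb'
    set C := (G.induce (Dᶜ : Set V)).connectedComponentMk b' with hC
    set S : Set V := Subtype.val '' C.supp with hS
    have hSDc : S ⊆ (Dᶜ : Set V) := by
      rintro v ⟨x, _, rfl⟩; exact x.2
    have hSblue : ∀ v ∈ S, c v = false := by
      rintro v ⟨x, hx, rfl⟩
      have hx' : (G.induce (Dᶜ : Set V)).connectedComponentMk x = C :=
        (SimpleGraph.ConnectedComponent.mem_supp_iff _ _).mp hx
      have hrch : (G.induce (Dᶜ : Set V)).Reachable b' x :=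
        (SimpleGraph.ConnectedComponent.exact hx').symm
      exact reachblue b' x hrch hb
    have hclosure : ∀ v ∈ S, ∀ w : V, G.Adj v w → w ∉ D → w ∈ S := by
      rintro v ⟨x, hx, rfl⟩ w hadj hwD
      have hx' : (G.induce (Dᶜ : Set V)).connectedComponentMk x = C :=
        (SimpleGraph.ConnectedComponent.mem_supp_iff _ _).mp hx
      have hadj' : (G.induce (Dᶜ : Set V)).Adj x ⟨w, hwD⟩ := hadj
      refine ⟨⟨w, hwD⟩, ?_, rfl⟩
      rw [SimpleGraph.ConnectedComponent.mem_supp_iff, ← hx']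
      exact (SimpleGraph.ConnectedComponent.sound hadj'.symm.reachable)
    refine ⟨C, fun v => if v ∈ S then false else true, fun v => by by_cases h : v ∈ S <;> simp [h, hS], ?_, ?_, ?_⟩
    · -- subsingleton condition
      intro v p hp q hq
      simp only [Set.mem_setOf_eq] at hp hq
      by_cases hv : v ∈ S
      · -- v blue
        have hpS : p ∉ S := by
          intro hpS
          apply hp.2
          simp [hpS, hv]
        have hqS : q ∉ S := by
          intro hqS
          apply hq.2
          simp [hqS, hv]
        have hpD : p ∈ D := by
          by_contra hpD
          exact hpS (hclosure v hv p hp.1 hpD)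
        have hqD : q ∈ D := by
          by_contra hqD
          exact hqS (hclosure v hv q hq.1 hqD)
        have hcv : c v = false := hSblue v hv
        exact hsub v ⟨hp.1, by simp [hD p hpD, hcv]⟩ ⟨hq.1, by simp [hD q hqD, hcv]⟩
      · -- v red
        have hpS : p ∈ S := by
          by_contra hpS
          apply hp.2
          simp [hpS, hv]
        have hqS : q ∈ S := by
          by_contra hqS
          apply hq.2
          simp [hqS, hv]
        cases hcv : c v with
        | true =>
          exact hsub v ⟨hp.1, by simp [hSblue p hpS, hcv]⟩
            ⟨hq.1, by simp [hSblue q hqS, hcv]⟩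
        | false =>
          exfalso
          have hvD : v ∉ D := by
            intro h
            rw [hD v h] at hcv
            exact absurd hcv (by simp)
          exact hv (hclosure p hpS v hp.1.symm hvD)
    · obtain ⟨d, hdD, _⟩ := hdom b hbD
      refine ⟨d, ?_⟩
      show (if d ∈ S then false else true) = true
      rw [if_neg (fun h => (hSDc h) hdD)]
    · refine ⟨b, ?_⟩
      have : b ∈ S := ⟨b', (SimpleGraph.ConnectedComponent.mem_supp_iff _ _).mpr rfl, rfl⟩
      simp [this]
  · rintro ⟨C, c, hiff, hvalid⟩
    refine ⟨c, hvalid, fun v hv => ?_⟩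
    cases h : c v with
    | true => rfl
    | false =>
      obtain ⟨x, _, rfl⟩ := (hiff _).mp h
      exact absurd hv x.2
end

section
/- Let G be a graph and let A and B be disjoint vertex sets of G with |A| ≥ 2 and |B| ≥ 3 such that every vertex of A is adjacent in G to every vertex of B (so A and B span a not necessarily induced complete bipartite subgraph of G). Then in every valid red-blue colouring of G, the set A ∪ B is monochromatic. -/
/-- If disjoint vertex sets `A` and `B` with `|A| ≥ 2` and `|B| ≥ 3` span a complete
bipartite subgraph of `G`, then `A ∪ B` is monochromatic in every valid red-blue
colouring of `G`. -/
theorem completeBipartite_monochromatic {V : Type*} (G : SimpleGraph V)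
    (A B : Set V) (hAB : Disjoint A B) (hA : 2 ≤ A.encard) (hB : 3 ≤ B.encard)
    (hadj : ∀ a ∈ A, ∀ b ∈ B, G.Adj a b)
    (c : V → Bool) (hc : IsValidColoring G c) :
    ∀ x ∈ A ∪ B, ∀ y ∈ A ∪ B, c x = c y := by
  obtain ⟨hsub, -, -⟩ := hc
  have hAnt : A.Nontrivial := by
    obtain ⟨u, v, hu, hv, huv⟩ := Set.one_lt_encard_iff.mp (lt_of_lt_of_le (by norm_num) hA)
    exact ⟨u, hu, v, hv, huv⟩
  obtain ⟨a1, ha1, a2, ha2, ha12⟩ := hAnt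
  have hBnt : B.Nontrivial := by
    obtain ⟨u, v, hu, hv, huv⟩ := Set.one_lt_encard_iff.mp (lt_of_lt_of_le (by norm_num) hB)
    exact ⟨u, hu, v, hv, huv⟩
  obtain ⟨b1, hb1, b2, hb2, hb12⟩ := hBnt
  have hb3ex : (B \ {b1, b2}).Nonempty := by
    rw [Set.nonempty_iff_ne_empty]
    intro h
    have hBsub : B ⊆ {b1, b2} := by
      intro x hx
      by_contra hx'
      exact (Set.eq_empty_iff_forall_notMem.mp h x) ⟨hx, hx'⟩
    have h2 : B.encard ≤ 2 := by
      calc B.encard ≤ ({b1, b2} : Set V).encard := Set.encard_mono hBsub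
        _ = 2 := Set.encard_pair hb12
    have := hB.trans h2
    norm_num at this
  obtain ⟨b3, hb3B, hb3'⟩ := hb3ex
  have hb31 : b3 ≠ b1 := by intro h; exact hb3' (by simp [h])
  have hb32 : b3 ≠ b2 := by intro h; exact hb3' (by simp [h])
  have key : ∀ a ∈ A, ∀ b ∈ B, ∀ b' ∈ B, b ≠ b' → c b ≠ c a → c b' ≠ c a → False := by
    intro a ha b hb b' hb' hne h1 h2
    exact hne (hsub a ⟨hadj a ha b hb, h1⟩ ⟨hadj a ha b' hb', h2⟩)
  have hAmono : ∀ a ∈ A, ∀ a' ∈ A, c a = c a' := by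
    intro a ha a' ha'
    by_contra hne
    have hpair : ∃ x ∈ B, ∃ y ∈ B, x ≠ y ∧ c x = c y := by
      by_cases h12 : c b1 = c b2
      · exact ⟨b1, hb1, b2, hb2, hb12, h12⟩
      by_cases h13 : c b1 = c b3
      · exact ⟨b1, hb1, b3, hb3B, Ne.symm hb31, h13⟩
      · refine ⟨b2, hb2, b3, hb3B, Ne.symm hb32, ?_⟩
        revert h12 h13
        cases c b1 <;> cases c b2 <;> cases c b3 <;> simp
    obtain ⟨x, hx, y, hy, hxy, hcxy⟩ := hpair
    by_cases hxa : c x = c a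
    · refine key a' ha' x hx y hy hxy ?_ ?_
      · rw [hxa]; exact hne
      · rw [← hcxy, hxa]; exact hne
    · exact key a ha x hx y hy hxy hxa (by rw [← hcxy]; exact hxa)
  have hAll : ∀ x ∈ A ∪ B, c x = c a1 := by
    intro x hx
    rcases hx with hxA | hxB
    · exact hAmono x hxA a1 ha1
    · by_contra h
      exact ha12 (hsub x
        ⟨(hadj a1 ha1 x hxB).symm, fun hh => h hh.symm⟩
        ⟨(hadj a2 ha2 x hxB).symm, fun hh => h ((hAmono a2 ha2 a1 ha1) ▸ hh).symm⟩)
  intro x hx y hy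
  rw [hAll x hx, hAll y hy]
end

section
/- Let G be a connected graph and let uv be an edge of G. Let G_uv be the graph obtained from G by the K_{2,2}-replacement of uv. Then G has a matching cut if and only if G_uv has a matching cut. -/
/-- The graph `G_uv` obtained from `G` by the `K_{2,2}`-replacement of the edge `uv`:
the edge `uv` is deleted, two new vertices `w₁ = Sum.inr 0` and `w₂ = Sum.inr 1` are
added, together with the four edges `u w₁`, `u w₂`, `v w₁`, `v w₂`. -/
def k22Replacement {V : Type*} (G : SimpleGraph V) (u v : V) :
    SimpleGraph (V ⊕ Fin 2) :=
  SimpleGraph.fromRel (fun x y =>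
    match x, y with
    | Sum.inl a, Sum.inl b => G.Adj a b ∧ s(a, b) ≠ s(u, v)
    | Sum.inl a, Sum.inr _ => a = u ∨ a = v
    | _, _ => False)

namespace K22Aux

open SimpleGraph Sum

variable {V : Type*} {G : SimpleGraph V} {u v : V}

lemma k22_adj_inl_inl {a b : V} :
    (k22Replacement G u v).Adj (inl a) (inl b) ↔ G.Adj a b ∧ s(a,b) ≠ s(u,v) := by
  simp only [k22Replacement, fromRel_adj]
  constructor
  · rintro ⟨hne, ⟨h1, h2⟩ | ⟨h1, h2⟩⟩
    · exact ⟨h1, h2⟩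
    · exact ⟨h1.symm, by rwa [Sym2.eq_swap] at h2⟩
  · rintro ⟨h1, h2⟩
    exact ⟨by simpa using h1.ne, Or.inl ⟨h1, h2⟩⟩

lemma k22_adj_inl_inr {a : V} {i : Fin 2} :
    (k22Replacement G u v).Adj (inl a) (inr i) ↔ a = u ∨ a = v := by
  simp only [k22Replacement, fromRel_adj]
  constructor
  · rintro ⟨-, h | h⟩
    · exact h
    · exact h.elim
  · intro h; exact ⟨by simp, Or.inl h⟩

lemma k22_adj_inr_inl {a : V} {i : Fin 2} :
    (k22Replacement G u v).Adj (inr i) (inl a) ↔ a = u ∨ a = v := by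
  rw [SimpleGraph.adj_comm]; exact k22_adj_inl_inr

lemma k22_not_adj_inr_inr {i j : Fin 2} :
    ¬ (k22Replacement G u v).Adj (inr i) (inr j) := by
  simp [k22Replacement, fromRel_adj]

lemma k22_comm : k22Replacement G u v = k22Replacement G v u := by
  ext x y
  rcases x with a | i <;> rcases y with b | j
  · rw [k22_adj_inl_inl, k22_adj_inl_inl, Sym2.eq_swap (a := u)]
  · rw [k22_adj_inl_inr, k22_adj_inl_inr, or_comm]
  · rw [k22_adj_inr_inl, k22_adj_inr_inl, or_comm]
  · exact iff_of_false k22_not_adj_inr_inr k22_not_adj_inr_inr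

lemma reach_map {α β : Type*} {H1 : SimpleGraph α} {H2 : SimpleGraph β} (f : α → β)
    (hf : ∀ a b, H1.Adj a b → H2.Reachable (f a) (f b)) {x y : α}
    (h : H1.Reachable x y) : H2.Reachable (f x) (f y) := by
  obtain ⟨w⟩ := h
  induction w with
  | nil => exact Reachable.refl _
  | cons h p ih => exact (hf _ _ h).trans ih

lemma inl_mem_map {e : Sym2 V} {x : V} :
    inl x ∈ Sym2.map (@Sum.inl V (Fin 2)) e ↔ x ∈ e := by
  rw [Sym2.mem_map]
  constructor
  · rintro ⟨y, hy, h⟩; exact (inl_injective h) ▸ hy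
  · exact fun h => ⟨x, h, rfl⟩

lemma inr_not_mem_map {e : Sym2 V} {i : Fin 2} :
    inr i ∉ Sym2.map (@Sum.inl V (Fin 2)) e := by
  rw [Sym2.mem_map]; rintro ⟨y, -, h⟩; simp at h

lemma exists_not_reach {α : Type*} [Nonempty α] {H : SimpleGraph α} (h : ¬H.Connected) :
    ∃ x y, ¬H.Reachable x y := by
  by_contra hc; push_neg at hc; exact h ⟨fun a b => hc a b⟩

lemma matching_image {M : Set (Sym2 V)}
    (hmat : ∀ e ∈ M, ∀ f ∈ M, e ≠ f → ∀ x : V, x ∈ e → x ∉ f)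
    {e f : Sym2 V} (he : e ∈ M) (hf : f ∈ M)
    (hef : Sym2.map (@Sum.inl V (Fin 2)) e ≠ Sym2.map Sum.inl f)
    {w : V ⊕ Fin 2} (hwe : w ∈ Sym2.map (@Sum.inl V (Fin 2)) e)
    (hwf : w ∈ Sym2.map (@Sum.inl V (Fin 2)) f) : False := by
  rcases w with x | i
  · exact hmat e he f hf (fun h => hef (by rw [h])) x (inl_mem_map.1 hwe) (inl_mem_map.1 hwf)
  · exact inr_not_mem_map hwe

/-- Lifting adjacency-to-reachability statements over the sum type. -/
lemma sum_adj_reach {M' : Set (Sym2 (V ⊕ Fin 2))} {H2 : SimpleGraph V}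
    (π : V ⊕ Fin 2 → V)
    (h1 : ∀ a b : V, ((k22Replacement G u v).deleteEdges M').Adj (inl a) (inl b) →
      H2.Reachable (π (inl a)) (π (inl b)))
    (h2 : ∀ (a : V) (k : Fin 2), ((k22Replacement G u v).deleteEdges M').Adj (inl a) (inr k) →
      H2.Reachable (π (inl a)) (π (inr k))) :
    ∀ x y, ((k22Replacement G u v).deleteEdges M').Adj x y → H2.Reachable (π x) (π y) := by
  rintro (a | k) (b | l) h
  · exact h1 a b h
  · exact h2 a l h
  · exact (h2 b k h.symm).symm
  · exact absurd ((SimpleGraph.deleteEdges_adj).1 h).1 k22_not_adj_inr_inr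

/-- Forward direction. -/
lemma forward (hG : G.Connected) (huv : G.Adj u v) {M : Set (Sym2 V)}
    (hM : IsMatchingCut G M) :
    ∃ M' : Set (Sym2 (V ⊕ Fin 2)), IsMatchingCut (k22Replacement G u v) M' := by
  obtain ⟨hsub, hmat, hdisc⟩ := hM
  haveI : Nonempty V := hG.nonempty
  obtain ⟨x, y, hxy⟩ := exists_not_reach hdisc
  by_cases huvM : s(u, v) ∈ M
  · -- case uv ∈ M
    set M' : Set (Sym2 (V ⊕ Fin 2)) := Sym2.map Sum.inl '' (M \ {s(u,v)}) ∪
      {s(Sum.inl u, Sum.inr 0), s(Sum.inl v, Sum.inr 1)} with hM'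
    refine ⟨M', ?_, ?_, ?_⟩
    · rintro e (⟨f, ⟨hfM, hfne⟩, rfl⟩ | (rfl | rfl))
      · induction f using Sym2.ind with
        | _ a b =>
          rw [Sym2.map_pair_eq, SimpleGraph.mem_edgeSet, k22_adj_inl_inl]
          exact ⟨(hsub hfM : _ ∈ G.edgeSet), by simpa using hfne⟩
      · rw [SimpleGraph.mem_edgeSet, k22_adj_inl_inr]; exact Or.inl rfl
      · rw [SimpleGraph.mem_edgeSet, k22_adj_inl_inr]; exact Or.inr rfl
    · -- matching condition
      have himg : ∀ f ∈ M \ {s(u,v)}, ∀ w : V ⊕ Fin 2,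
          w ∈ Sym2.map Sum.inl f → (w = Sum.inl u ∨ w = Sum.inl v) → False := by
        rintro f ⟨hfM, hfne⟩ w hw (rfl | rfl)
        · exact hmat s(u,v) huvM f hfM (fun h => hfne (h ▸ rfl)) u (Sym2.mem_mk_left u v)
            (inl_mem_map.1 hw)
        · exact hmat s(u,v) huvM f hfM (fun h => hfne (h ▸ rfl)) v (Sym2.mem_mk_right u v)
            (inl_mem_map.1 hw)
      rintro e (⟨e', he', rfl⟩ | (rfl | rfl)) f (⟨f', hf', rfl⟩ | (rfl | rfl)) hef w hwe hwf
      · exact matching_image (fun a ha b hb => hmat a ha.1 b hb.1) he' hf' hef hwe hwf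
      · rcases Sym2.mem_iff.1 hwf with rfl | rfl
        · exact himg e' he' _ hwe (Or.inl rfl)
        · exact inr_not_mem_map hwe
      · rcases Sym2.mem_iff.1 hwf with rfl | rfl
        · exact himg e' he' _ hwe (Or.inr rfl)
        · exact inr_not_mem_map hwe
      · rcases Sym2.mem_iff.1 hwe with rfl | rfl
        · exact himg f' hf' _ hwf (Or.inl rfl)
        · exact inr_not_mem_map hwf
      · exact hef rfl
      · rcases Sym2.mem_iff.1 hwe with rfl | rfl <;> rcases Sym2.mem_iff.1 hwf with h | h <;>
          simp_all [huv.ne]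
      · rcases Sym2.mem_iff.1 hwe with rfl | rfl
        · exact himg f' hf' _ hwf (Or.inr rfl)
        · exact inr_not_mem_map hwf
      · rcases Sym2.mem_iff.1 hwe with rfl | rfl <;> rcases Sym2.mem_iff.1 hwf with h | h <;>
          simp_all [huv.ne]
      · exact hef rfl
    · -- disconnection
      set π : V ⊕ Fin 2 → V := Sum.elim id (fun k => if k = 0 then v else u) with hπ
      intro hc
      refine hxy ?_
      have key := sum_adj_reach (G := G) (u := u) (v := v) (M' := M')
        (H2 := G.deleteEdges M) π ?_ ?_
      · have := reach_map π key (hc.preconnected (inl x) (inl y))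
        simpa [hπ] using this
      · intro a b hab
        rw [SimpleGraph.deleteEdges_adj] at hab
        obtain ⟨hadj, hnm⟩ := hab
        rw [k22_adj_inl_inl] at hadj
        refine SimpleGraph.Adj.reachable ?_
        rw [SimpleGraph.deleteEdges_adj]
        refine ⟨hadj.1, fun hmem => hnm ?_⟩
        exact Or.inl ⟨s(a,b), ⟨hmem, hadj.2⟩, Sym2.map_pair_eq _ _ _⟩
      · intro a k hab
        rw [SimpleGraph.deleteEdges_adj] at hab
        obtain ⟨hadj, hnm⟩ := hab
        rw [k22_adj_inl_inr] at hadj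
        simp only [hπ, Sum.elim_inl, Sum.elim_inr, id_eq]
        rcases hadj with rfl | rfl <;> fin_cases k
        · exact absurd (Or.inr (Or.inl rfl)) hnm
        · exact SimpleGraph.Reachable.refl _
        · exact SimpleGraph.Reachable.refl _
        · exact absurd (Or.inr (Or.inr rfl)) hnm
  · -- case uv ∉ M
    set M' : Set (Sym2 (V ⊕ Fin 2)) := Sym2.map Sum.inl '' M with hM'
    refine ⟨M', ?_, ?_, ?_⟩
    · rintro e ⟨f, hfM, rfl⟩
      induction f using Sym2.ind with
      | _ a b =>
        rw [Sym2.map_pair_eq, SimpleGraph.mem_edgeSet, k22_adj_inl_inl]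
        exact ⟨(hsub hfM : _ ∈ G.edgeSet), fun h => huvM (h ▸ hfM)⟩
    · rintro e ⟨e', he', rfl⟩ f ⟨f', hf', rfl⟩ hef w hwe hwf
      exact matching_image hmat he' hf' hef hwe hwf
    · set π : V ⊕ Fin 2 → V := Sum.elim id (fun _ => u) with hπ
      intro hc
      refine hxy ?_
      have key := sum_adj_reach (G := G) (u := u) (v := v) (M' := M')
        (H2 := G.deleteEdges M) π ?_ ?_
      · have := reach_map π key (hc.preconnected (inl x) (inl y))
        simpa [hπ] using this
      · intro a b hab
        rw [SimpleGraph.deleteEdges_adj] at hab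
        obtain ⟨hadj, hnm⟩ := hab
        rw [k22_adj_inl_inl] at hadj
        refine SimpleGraph.Adj.reachable ?_
        rw [SimpleGraph.deleteEdges_adj]
        exact ⟨hadj.1, fun hmem => hnm ⟨s(a,b), hmem, Sym2.map_pair_eq _ _ _⟩⟩
      · intro a k hab
        rw [SimpleGraph.deleteEdges_adj] at hab
        obtain ⟨hadj, -⟩ := hab
        rw [k22_adj_inl_inr] at hadj
        simp only [hπ, Sum.elim_inl, Sum.elim_inr, id_eq]
        rcases hadj with rfl | rfl
        · exact SimpleGraph.Reachable.refl _
        · refine SimpleGraph.Adj.reachable ?_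
          rw [SimpleGraph.deleteEdges_adj]
          refine ⟨huv.symm, fun hmem => huvM ?_⟩
          rwa [Sym2.eq_swap] at hmem

/-- Reverse direction, case where no `K_{2,2}` edge at `v` is in the cut. -/
lemma reverse_caseB (huv : G.Adj u v) {M' : Set (Sym2 (V ⊕ Fin 2))}
    (hM' : IsMatchingCut (k22Replacement G u v) M')
    (hv : ∀ k : Fin 2, s(Sum.inl v, Sum.inr k) ∉ M') :
    ∃ M : Set (Sym2 V), IsMatchingCut G M := by
  obtain ⟨hsub', hmat', hdisc'⟩ := hM'
  haveI : Nonempty (V ⊕ Fin 2) := ⟨inr 0⟩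
  obtain ⟨x, y, hxy⟩ := exists_not_reach hdisc'
  have hk0 : ∃ k : Fin 2, s(Sum.inl u, Sum.inr k) ∉ M' := by
    by_contra h
    push_neg at h
    exact hmat' _ (h 0) _ (h 1) (by simp [Sym2.eq_iff]) (inl u) (Sym2.mem_mk_left _ _)
      (Sym2.mem_mk_left _ _)
  obtain ⟨k0, hk0⟩ := hk0
  set M : Set (Sym2 V) := {e | Sym2.map Sum.inl e ∈ M'} with hM
  refine ⟨M, ?_, ?_, ?_⟩
  · intro e he
    induction e using Sym2.ind with
    | _ a b =>
      have h := hsub' he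
      rw [Sym2.map_pair_eq, SimpleGraph.mem_edgeSet, k22_adj_inl_inl] at h
      exact h.1
  · intro e he f hf hef z hze hzf
    exact hmat' _ he _ hf (fun h => hef (Sym2.map.injective inl_injective h)) (inl z)
      (inl_mem_map.2 hze) (inl_mem_map.2 hzf)
  · set π : V ⊕ Fin 2 → V := Sum.elim id (fun _ => v) with hπ
    have huvreach : ((k22Replacement G u v).deleteEdges M').Reachable (inl u) (inl v) := by
      have h1 : ((k22Replacement G u v).deleteEdges M').Adj (inl u) (inr k0) := by
        rw [SimpleGraph.deleteEdges_adj, k22_adj_inl_inr]; exact ⟨Or.inl rfl, hk0⟩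
      have h2 : ((k22Replacement G u v).deleteEdges M').Adj (inr k0) (inl v) := by
        rw [SimpleGraph.deleteEdges_adj, k22_adj_inr_inl]
        exact ⟨Or.inr rfl, fun h => hv k0 (by rwa [Sym2.eq_swap] at h)⟩
      exact h1.reachable.trans h2.reachable
    have lift2 : ∀ a b : V, (G.deleteEdges M).Adj a b →
        ((k22Replacement G u v).deleteEdges M').Reachable (inl a) (inl b) := by
      intro a b hab
      rw [SimpleGraph.deleteEdges_adj] at hab
      obtain ⟨hadj, hnm⟩ := hab
      by_cases h : s(a,b) = s(u,v)
      · rcases Sym2.eq_iff.1 h with ⟨rfl, rfl⟩ | ⟨rfl, rfl⟩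
        · exact huvreach
        · exact huvreach.symm
      · refine SimpleGraph.Adj.reachable ?_
        rw [SimpleGraph.deleteEdges_adj, k22_adj_inl_inl]
        refine ⟨⟨hadj, h⟩, fun hh => hnm ?_⟩
        show Sym2.map Sum.inl s(a,b) ∈ M'
        rwa [Sym2.map_pair_eq]
    have bridge : ∀ z : V ⊕ Fin 2,
        ((k22Replacement G u v).deleteEdges M').Reachable z (inl (π z)) := by
      rintro (a | k)
      · exact SimpleGraph.Reachable.refl _
      · refine SimpleGraph.Adj.reachable ?_
        rw [SimpleGraph.deleteEdges_adj, k22_adj_inr_inl]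
        exact ⟨Or.inr rfl, fun h => hv k (by rwa [Sym2.eq_swap] at h)⟩
    intro hc
    refine hxy ?_
    have r := reach_map Sum.inl lift2 (hc.preconnected (π x) (π y))
    exact (bridge x).trans (r.trans (bridge y).symm)

/-- Reverse direction, case where the cut contains an edge at `u` and an edge at `v`. -/
lemma reverse_caseA (huv : G.Adj u v) {M' : Set (Sym2 (V ⊕ Fin 2))}
    (hM' : IsMatchingCut (k22Replacement G u v) M') {i j : Fin 2}
    (hui : s(Sum.inl u, Sum.inr i) ∈ M') (hvj : s(Sum.inl v, Sum.inr j) ∈ M') :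
    ∃ M : Set (Sym2 V), IsMatchingCut G M := by
  obtain ⟨hsub', hmat', hdisc'⟩ := hM'
  haveI : Nonempty (V ⊕ Fin 2) := ⟨inr 0⟩
  obtain ⟨x, y, hxy⟩ := exists_not_reach hdisc'
  have hij : i ≠ j := by
    rintro rfl
    exact hmat' _ hui _ hvj (by simp [Sym2.eq_iff, huv.ne]) (inr i)
      (Sym2.mem_mk_right _ _) (Sym2.mem_mk_right _ _)
  have hvi : s(Sum.inl v, Sum.inr i) ∉ M' := fun h =>
    hmat' _ hui _ h (by simp [Sym2.eq_iff, huv.ne]) (inr i)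
      (Sym2.mem_mk_right _ _) (Sym2.mem_mk_right _ _)
  have huj : s(Sum.inl u, Sum.inr j) ∉ M' := fun h =>
    hmat' _ hui _ h (by simp [Sym2.eq_iff, hij]) (inl u)
      (Sym2.mem_mk_left _ _) (Sym2.mem_mk_left _ _)
  set M : Set (Sym2 V) := {e | Sym2.map Sum.inl e ∈ M'} ∪ {s(u,v)} with hM
  have hps : ∀ e : Sym2 V, Sym2.map Sum.inl e ∈ M' → ∀ z ∈ s(u,v), z ∉ e := by
    intro e he z hz hze
    rcases Sym2.mem_iff.1 hz with rfl | rfl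
    · exact hmat' _ he _ hui
        (fun h => inr_not_mem_map (h ▸ Sym2.mem_mk_right (Sum.inl z) (inr i)))
        (inl z) (inl_mem_map.2 hze) (Sym2.mem_mk_left _ _)
    · exact hmat' _ he _ hvj
        (fun h => inr_not_mem_map (h ▸ Sym2.mem_mk_right (Sum.inl z) (inr j)))
        (inl z) (inl_mem_map.2 hze) (Sym2.mem_mk_left _ _)
  refine ⟨M, ?_, ?_, ?_⟩
  · rintro e (he | rfl)
    · induction e using Sym2.ind with
      | _ a b =>
        have h := hsub' he
        rw [Sym2.map_pair_eq, SimpleGraph.mem_edgeSet, k22_adj_inl_inl] at h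
        exact h.1
    · exact huv
  · rintro e (he | rfl) f (hf | rfl) hef z hze hzf
    · exact hmat' _ he _ hf (fun h => hef (Sym2.map.injective inl_injective h)) (inl z)
        (inl_mem_map.2 hze) (inl_mem_map.2 hzf)
    · exact hps e he z hzf hze
    · exact hps f hf z hze hzf
    · exact hef rfl
  · set π : V ⊕ Fin 2 → V := Sum.elim id (fun k => if k = i then v else u) with hπ
    have lift2 : ∀ a b : V, (G.deleteEdges M).Adj a b →
        ((k22Replacement G u v).deleteEdges M').Reachable (inl a) (inl b) := by
      intro a b hab
      rw [SimpleGraph.deleteEdges_adj] at hab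
      obtain ⟨hadj, hnm⟩ := hab
      have h1 : s(a,b) ≠ s(u,v) := fun h => hnm (Or.inr h)
      refine SimpleGraph.Adj.reachable ?_
      rw [SimpleGraph.deleteEdges_adj, k22_adj_inl_inl]
      refine ⟨⟨hadj, h1⟩, fun hh => hnm (Or.inl ?_)⟩
      show Sym2.map Sum.inl s(a,b) ∈ M'
      rwa [Sym2.map_pair_eq]
    have bridge : ∀ z : V ⊕ Fin 2,
        ((k22Replacement G u v).deleteEdges M').Reachable z (inl (π z)) := by
      rintro (a | k)
      · exact SimpleGraph.Reachable.refl _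
      · by_cases hk : k = i
        · subst hk
          have hπk : π (inr k) = v := by simp [hπ]
          rw [hπk]
          refine SimpleGraph.Adj.reachable ?_
          rw [SimpleGraph.deleteEdges_adj, k22_adj_inr_inl]
          exact ⟨Or.inr rfl, fun h => hvi (by rwa [Sym2.eq_swap] at h)⟩
        · have hkj : k = j := by omega
          subst hkj
          have hπk : π (inr k) = u := by simp [hπ, hk]
          rw [hπk]
          refine SimpleGraph.Adj.reachable ?_
          rw [SimpleGraph.deleteEdges_adj, k22_adj_inr_inl]
          exact ⟨Or.inl rfl, fun h => huj (by rwa [Sym2.eq_swap] at h)⟩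
    intro hc
    refine hxy ?_
    have r := reach_map Sum.inl lift2 (hc.preconnected (π x) (π y))
    exact (bridge x).trans (r.trans (bridge y).symm)

/-- Reverse direction. -/
lemma reverse (huv : G.Adj u v) {M' : Set (Sym2 (V ⊕ Fin 2))}
    (hM' : IsMatchingCut (k22Replacement G u v) M') :
    ∃ M : Set (Sym2 V), IsMatchingCut G M := by
  by_cases hPv : ∃ k : Fin 2, s(Sum.inl v, Sum.inr k) ∈ M'
  · by_cases hPu : ∃ k : Fin 2, s(Sum.inl u, Sum.inr k) ∈ M'
    · obtain ⟨i, hi⟩ := hPu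
      obtain ⟨j, hj⟩ := hPv
      exact reverse_caseA huv hM' hi hj
    · push_neg at hPu
      exact reverse_caseB (u := v) (v := u) huv.symm (k22_comm ▸ hM') hPu
  · push_neg at hPv
    exact reverse_caseB huv hM' hPv

end K22Aux

/-- A connected graph `G` has a matching cut iff the graph obtained from `G` by a
`K_{2,2}`-replacement of an edge `uv` has a matching cut. -/
theorem matchingCut_iff_k22Replacement {V : Type*} (G : SimpleGraph V)
    (hG : G.Connected) (u v : V) (huv : G.Adj u v) :
    (∃ M : Set (Sym2 V), IsMatchingCut G M) ↔
      ∃ M' : Set (Sym2 (V ⊕ Fin 2)), IsMatchingCut (k22Replacement G u v) M' := by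
  constructor
  · rintro ⟨M, hM⟩
    exact K22Aux.forward hG huv hM
  · rintro ⟨M', hM'⟩
    exact K22Aux.reverse huv hM'
end

section
/- Let G = (V,E) be a connected graph that has no matching cut consisting of at most 2 edges. Let S, T, X, Y ⊆ V satisfy S ⊆ X, T ⊆ Y, X ∩ Y = ∅, and suppose that every vertex of V ∖ (X ∪ Y) has no neighbour in S ∪ T, at most one neighbour in X ∖ S, and at most one neighbour in Y ∖ T. Suppose further that the induced subgraph G − (X ∪ Y) is P3-free. Then for every valid red-blue colouring of G in which every vertex of X is red and every vertex of Y is blue, every connected component of G − (X ∪ Y) is monochromatic. -/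
/-!
A `P₃`-free graph is a disjoint union of cliques, so two differently coloured vertices in
one component of `G - (X ∪ Y)` would give an edge `uv` with `u` red and `v` blue. In a valid
colouring `v` is the only blue neighbour of `u` and `u` the only red neighbour of `v`, so `u`
and `v` have no common neighbour; hence `u` has no other neighbour outside `X ∪ Y`, none in
`Y`, and (by the hypotheses on `S`) at most one in `X`, and symmetrically for `v`. The at most
two edges leaving `{u, v}` (or the edge `uv` itself if there are none) then form a matching cut.
-/

namespace SimpleGraph

variable {V : Type*} {G : SimpleGraph V}

lemma not_connected_deleteEdges_of_closed {M : Set (Sym2 V)} {s : Set V}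
    (hs : ∀ x ∈ s, ∀ z, G.Adj x z → s(x, z) ∉ M → z ∈ s) {a b : V} (ha : a ∈ s) (hb : b ∉ s) :
    ¬ (G.deleteEdges M).Connected := by
  intro hcon
  obtain ⟨d, -, hd, hd'⟩ := (hcon.preconnected a b).some.exists_boundary_dart s ha hb
  have hadj := (deleteEdges_adj ..).mp d.adj
  exact hd' (hs _ hd _ hadj.1 hadj.2)

lemma isMatchingCut_pair {a b c d : V} (hab : G.Adj a b) (hcd : G.Adj c d)
    (hac : a ≠ c) (had : a ≠ d) (hbc : b ≠ c) (hbd : b ≠ d)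
    (hdis : ¬ (G.deleteEdges {s(a, b), s(c, d)}).Connected) :
    IsMatchingCut G {s(a, b), s(c, d)} := by
  refine ⟨?_, ?_, hdis⟩
  · rintro e (rfl | rfl)
    exacts [hab, hcd]
  · rintro e (rfl | rfl) f (rfl | rfl) hef w hwe hwf <;> grind

lemma isMatchingCut_single {a b : V} (hab : G.Adj a b)
    (hdis : ¬ (G.deleteEdges {s(a, b)}).Connected) :
    IsMatchingCut G {s(a, b), s(a, b)} := by
  rw [Set.pair_eq_singleton]
  refine ⟨Set.singleton_subset_iff.mpr hab, ?_, hdis⟩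
  rintro e rfl f rfl hef
  exact absurd rfl hef

/-- The cut consists of the edges leaving `{u, v}`, or of `uv` alone if there are none. -/
theorem exists_isMatchingCut_pair_of_adj {u v : V} (huv : G.Adj u v)
    (hu : {w | G.Adj u w ∧ w ≠ v}.Subsingleton) (hv : {w | G.Adj v w ∧ w ≠ u}.Subsingleton)
    (hcommon : ∀ w, G.Adj u w → ¬ G.Adj v w) :
    ∃ e f, IsMatchingCut G {e, f} := by
  wlog hx : ∃ x, G.Adj u x ∧ x ≠ v generalizing u v
  · by_cases hy : ∃ y, G.Adj v y ∧ y ≠ u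
    · exact this huv.symm hv hu (fun w hvw huw => hcommon w huw hvw) hy
    push Not at hx
    refine ⟨_, _, isMatchingCut_single huv ?_⟩
    refine not_connected_deleteEdges_of_closed (s := {u}) ?_ rfl huv.ne'
    rintro _ rfl z hz hzM
    exact (hzM (hx z hz ▸ rfl)).elim
  obtain ⟨x, hux, hxv⟩ := hx
  have hu_closed : ∀ {M : Set (Sym2 V)}, s(u, x) ∈ M → ∀ z, G.Adj u z → s(u, z) ∉ M → z = v :=
    fun hxM z hz hzM => by_contra fun hzv => hzM (hu ⟨hz, hzv⟩ ⟨hux, hxv⟩ ▸ hxM)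
  have hx_out : x ∉ ({u, v} : Set V) := by simp [hux.ne', hxv]
  by_cases hy : ∃ y, G.Adj v y ∧ y ≠ u
  · obtain ⟨y, hvy, hyu⟩ := hy
    refine ⟨_, _, isMatchingCut_pair hux hvy huv.ne hyu.symm hxv
      (fun hxy => hcommon x hux (hxy ▸ hvy)) ?_⟩
    refine not_connected_deleteEdges_of_closed ?_ (.inl rfl) hx_out
    rintro _ (rfl | rfl) z hz hzM
    · exact .inr (hu_closed (.inl rfl) z hz hzM)
    · exact .inl (by_contra fun hzu => hzM (.inr (hv ⟨hz, hzu⟩ ⟨hvy, hyu⟩ ▸ rfl)))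
  push Not at hy
  refine ⟨_, _, isMatchingCut_single hux ?_⟩
  refine not_connected_deleteEdges_of_closed ?_ (.inl rfl) hx_out
  rintro _ (rfl | rfl) z hz hzM
  · exact .inr (hu_closed (Set.mem_singleton _) z hz hzM)
  · exact .inl (hy z hz)

lemma adj_of_adj_of_adj_of_isEmpty_pathGraph_three {H : SimpleGraph V}
    (hP3 : IsEmpty (pathGraph 3 ↪g H)) {a w b : V} (haw : H.Adj a w) (hwb : H.Adj w b)
    (hab : a ≠ b) : H.Adj a b := by
  by_contra hnadj
  have hnadj' : ¬ H.Adj b a := fun h => hnadj h.symm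
  refine hP3.false ⟨⟨![a, w, b], ?_⟩, ?_⟩
  · intro i j hij
    fin_cases i <;> fin_cases j <;> simp_all [haw.ne, hwb.ne, haw.ne', hwb.ne']
  · intro i j
    change H.Adj (![a, w, b] i) (![a, w, b] j) ↔ _
    fin_cases i <;> fin_cases j <;>
      simp [pathGraph_adj, haw, hwb, haw.symm, hwb.symm, hnadj, hnadj']

lemma eq_or_adj_of_reachable_of_isEmpty_pathGraph_three {H : SimpleGraph V}
    (hP3 : IsEmpty (pathGraph 3 ↪g H)) {a b : V} (hab : H.Reachable a b) : a = b ∨ H.Adj a b := by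
  obtain ⟨p⟩ := hab
  induction p with
  | nil => exact .inl rfl
  | @cons a w b haw _ ih =>
    rcases ih with rfl | hwb
    · exact .inr haw
    · by_cases hab : a = b
      · exact .inl hab
      · exact .inr (adj_of_adj_of_adj_of_isEmpty_pathGraph_three hP3 haw hwb hab)

lemma not_adj_of_adj_of_ne_color {α : Type*} {c : V → α}
    (hc : ∀ v, {w | G.Adj v w ∧ c w ≠ c v}.Subsingleton) {u v w : V}
    (huv : G.Adj u v) (hcuv : c u ≠ c v)
    (huw : G.Adj u w) : ¬ G.Adj v w := by
  intro hvw
  by_cases hcw : c w = c u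
  · exact huw.ne (hc v ⟨hvw, hcw ▸ hcuv⟩ ⟨huv.symm, hcuv⟩).symm
  · exact hvw.ne (hc u ⟨huw, hcw⟩ ⟨huv, hcuv.symm⟩).symm

lemma adj_ne_subset_of_ne_color {α : Type*} {c : V → α}
    (hc : ∀ v, {w | G.Adj v w ∧ c w ≠ c v}.Subsingleton) {X Y S : Set V} {u v : V}
    (huv : G.Adj u v) (hcuv : c u ≠ c v)
    (hY : ∀ y ∈ Y, c y ≠ c u) (hS : ∀ w ∈ S, ¬ G.Adj u w)
    (hclique : ∀ w ∉ X ∪ Y, G.Adj u w → w ≠ v → G.Adj v w) :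
    {w | G.Adj u w ∧ w ≠ v} ⊆ {w | w ∈ X \ S ∧ G.Adj u w} := by
  rintro w ⟨huw, hwv⟩
  refine ⟨⟨?_, fun hwS => hS w hwS huw⟩, huw⟩
  by_contra hwX
  have hwY : w ∉ Y := fun hwY => hwv (hc u ⟨huw, hY w hwY⟩ ⟨huv, hcuv.symm⟩)
  exact not_adj_of_adj_of_ne_color hc huv hcuv huw
    (hclique w (by simp [hwX, hwY]) huw hwv)

end SimpleGraph

open SimpleGraph

theorem components_monochromatic_outside_XY_general {V : Type*} (G : SimpleGraph V)
    (hno : ∀ e f : Sym2 V, ¬ IsMatchingCut G {e, f})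
    (S T X Y : Set V)
    (hout : ∀ v : V, v ∉ X ∪ Y →
      (∀ w ∈ S ∪ T, ¬ G.Adj v w) ∧
      {w : V | w ∈ X \ S ∧ G.Adj v w}.Subsingleton ∧
      {w : V | w ∈ Y \ T ∧ G.Adj v w}.Subsingleton)
    (hP3 : IsEmpty (SimpleGraph.pathGraph 3 ↪g G.induce ((X ∪ Y)ᶜ : Set V)))
    (c : V → Bool) (hc : IsValidColoring G c)
    (hX : ∀ x ∈ X, c x = true) (hY : ∀ y ∈ Y, c y = false) :
    ∀ (C : (G.induce ((X ∪ Y)ᶜ : Set V)).ConnectedComponent),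
      ∀ a ∈ C.supp, ∀ b ∈ C.supp, c (a : V) = c (b : V) := by
  intro C a ha b hb
  rcases eq_or_adj_of_reachable_of_isEmpty_pathGraph_three hP3 (C.reachable_of_mem_supp ha hb)
    with rfl | hab
  · rfl
  by_contra hne
  obtain ⟨u, v, huv, hu, hv⟩ :
      ∃ u v : ((X ∪ Y)ᶜ : Set V), G.Adj u v ∧ c u = true ∧ c v = false := by
    cases hca : c a <;> cases hcb : c b <;> simp only [hca, hcb, not_true_eq_false] at hne
    exacts [⟨b, a, hab.symm, hcb, hca⟩, ⟨a, b, hab, hca, hcb⟩]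
  have hcuv : c u ≠ c v := by simp [hu, hv]
  have hclique : ∀ {x y : ((X ∪ Y)ᶜ : Set V)}, G.Adj x y → ∀ w ∉ X ∪ Y, G.Adj x w → w ≠ y →
      G.Adj y w := fun hxy w hw hxw hwy =>
    (adj_of_adj_of_adj_of_isEmpty_pathGraph_three hP3 (a := ⟨w, hw⟩) hxw.symm hxy
      (by simpa [Subtype.ext_iff] using hwy)).symm
  obtain ⟨e, f, hcut⟩ := exists_isMatchingCut_pair_of_adj huv
    ((hout u u.2).2.1.anti (adj_ne_subset_of_ne_color hc.1 huv hcuv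
      (fun y hy => by simp [hY y hy, hu]) (fun w hw => (hout u u.2).1 w (.inl hw))
      (hclique huv)))
    ((hout v v.2).2.2.anti (adj_ne_subset_of_ne_color hc.1 huv.symm hcuv.symm
      (fun x hx => by simp [hX x hx, hv]) (fun w hw => (hout v v.2).1 w (.inr hw))
      (fun w hw => hclique huv.symm w (by rwa [Set.union_comm]))))
    (fun w => not_adj_of_adj_of_ne_color hc.1 huv hcuv)
  exact hno e f hcut

/-- Let `G` be connected with no matching cut of at most two edges, let `S ⊆ X`, `T ⊆ Y`
with `X ∩ Y = ∅` be such that every vertex outside `X ∪ Y` has no neighbour in `S ∪ T`,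
at most one neighbour in `X \ S` and at most one neighbour in `Y \ T`, and suppose
`G - (X ∪ Y)` is `P₃`-free. Then in every valid red-blue colouring of `G` colouring `X`
red and `Y` blue, every connected component of `G - (X ∪ Y)` is monochromatic. -/
theorem components_monochromatic_outside_XY {V : Type*} (G : SimpleGraph V)
    (hG : G.Connected)
    (hno : ∀ e f : Sym2 V, ¬ IsMatchingCut G {e, f})
    (S T X Y : Set V) (hSX : S ⊆ X) (hTY : T ⊆ Y) (hXY : Disjoint X Y)
    (hout : ∀ v : V, v ∉ X ∪ Y →
      (∀ w ∈ S ∪ T, ¬ G.Adj v w) ∧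
      {w : V | w ∈ X \ S ∧ G.Adj v w}.Subsingleton ∧
      {w : V | w ∈ Y \ T ∧ G.Adj v w}.Subsingleton)
    (hP3 : IsEmpty (SimpleGraph.pathGraph 3 ↪g G.induce ((X ∪ Y)ᶜ : Set V)))
    (c : V → Bool) (hc : IsValidColoring G c)
    (hX : ∀ x ∈ X, c x = true) (hY : ∀ y ∈ Y, c y = false) :
    ∀ (C : (G.induce ((X ∪ Y)ᶜ : Set V)).ConnectedComponent),
      ∀ a ∈ C.supp, ∀ b ∈ C.supp, c (a : V) = c (b : V) :=
  components_monochromatic_outside_XY_general G hno S T X Y hout hP3 c hc hX hY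
end

section
/- Let G be a connected graph and let x and y be adjacent vertices of G, each of degree exactly 2 in G. Let x' be the neighbour of x other than y and let y' be the neighbour of y other than x. If x' ≠ y', then {xx', yy'} is a matching cut of G of size 2. -/
/-- If `x` and `y` are adjacent vertices of degree `2` in a connected graph `G`, with
`x'` the other neighbour of `x` and `y'` the other neighbour of `y`, and `x' ≠ y'`, then
`{xx', yy'}` is a matching cut of `G` of size `2`. -/
theorem matchingCut_of_adjacent_degree_two {V : Type*} [Fintype V]
    (G : SimpleGraph V) [DecidableRel G.Adj] (hG : G.Connected)
    (x y x' y' : V) (hxy : G.Adj x y)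
    (hdx : G.degree x = 2) (hdy : G.degree y = 2)
    (hxx' : G.Adj x x') (hx'y : x' ≠ y)
    (hyy' : G.Adj y y') (hy'x : y' ≠ x)
    (hne : x' ≠ y') :
    IsMatchingCut G {s(x, x'), s(y, y')} ∧
      ({s(x, x'), s(y, y')} : Set (Sym2 V)).ncard = 2 := by
  classical
  have hxney : x ≠ y := hxy.ne
  have hxnex' : x ≠ x' := hxx'.ne
  have hyney' : y ≠ y' := hyy'.ne
  have hxney' : x ≠ y' := fun h => hy'x h.symm
  set M : Set (Sym2 V) := {s(x, x'), s(y, y')} with hM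
  -- neighbor sets
  have hNx : G.neighborFinset x = {y, x'} := by
    symm
    apply Finset.eq_of_subset_of_card_le
    · intro a ha
      simp only [Finset.mem_insert, Finset.mem_singleton] at ha
      rcases ha with rfl | rfl
      · exact (SimpleGraph.mem_neighborFinset G x a).mpr hxy
      · exact (SimpleGraph.mem_neighborFinset G x a).mpr hxx'
    · rw [G.card_neighborFinset_eq_degree, hdx]
      exact le_of_eq (Finset.card_pair (fun h => hx'y h.symm)).symm
  have hNy : G.neighborFinset y = {x, y'} := by
    symm
    apply Finset.eq_of_subset_of_card_le
    · intro a ha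
      simp only [Finset.mem_insert, Finset.mem_singleton] at ha
      rcases ha with rfl | rfl
      · exact (SimpleGraph.mem_neighborFinset G y a).mpr hxy.symm
      · exact (SimpleGraph.mem_neighborFinset G y a).mpr hyy'
    · rw [G.card_neighborFinset_eq_degree, hdy]
      exact le_of_eq (Finset.card_pair (fun h => hy'x h.symm)).symm
  have hadjx : ∀ w, G.Adj x w → w = y ∨ w = x' := by
    intro w hw
    have : w ∈ G.neighborFinset x := (SimpleGraph.mem_neighborFinset G x w).mpr hw
    rw [hNx] at this
    simpa using this
  have hadjy : ∀ w, G.Adj y w → w = x ∨ w = y' := by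
    intro w hw
    have : w ∈ G.neighborFinset y := (SimpleGraph.mem_neighborFinset G y w).mpr hw
    rw [hNy] at this
    simpa using this
  have hedges : s(x, x') ≠ s(y, y') := by
    intro h
    rw [Sym2.eq_iff] at h
    rcases h with ⟨h1, _⟩ | ⟨h1, _⟩
    · exact hxney h1
    · exact hxney' h1
  refine ⟨⟨?_, ?_, ?_⟩, ?_⟩
  · intro e he
    rcases he with rfl | he
    · exact hxx'
    · rw [Set.mem_singleton_iff] at he; subst he; exact hyy'
  · intro e he f hf hef v hve hvf
    have key : ∀ v : V, v ∈ s(x, x') → v ∉ s(y, y') := by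
      intro v hv hv'
      rw [Sym2.mem_iff] at hv hv'
      rcases hv with rfl | rfl <;> rcases hv' with h | h
      · exact hxney h
      · exact hxney' h
      · exact hx'y h
      · exact hne h
    rcases he with rfl | he
    · rcases hf with rfl | hf
      · exact hef rfl
      · rw [Set.mem_singleton_iff] at hf; subst hf; exact key v hve hvf
    · rw [Set.mem_singleton_iff] at he; subst he
      rcases hf with rfl | hf
      · exact key v hvf hve
      · rw [Set.mem_singleton_iff] at hf; subst hf; exact hef rfl
  · -- not connected
    intro hC
    have hreach : (G.deleteEdges M).Reachable x x' := hC.preconnected x x'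
    -- any vertex reachable from x (or y) is in {x, y}
    have step : ∀ v w : V, (G.deleteEdges M).Walk v w → (v = x ∨ v = y) → (w = x ∨ w = y) := by
      intro v w p
      induction p with
      | nil => exact fun h => h
      | @cons a b c hab p ih =>
        intro hv
        apply ih
        rw [SimpleGraph.deleteEdges_adj] at hab
        obtain ⟨hadj, hnot⟩ := hab
        rcases hv with rfl | rfl
        · rcases hadjx b hadj with rfl | rfl
          · exact Or.inr rfl
          · exact absurd (Or.inl rfl) hnot
        · rcases hadjy b hadj with rfl | rfl
          · exact Or.inl rfl
          · exact absurd (Or.inr rfl) hnot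
    obtain ⟨p⟩ := hreach
    rcases step x x' p (Or.inl rfl) with h | h
    · exact hxnex' h.symm
    · exact hx'y h
  · exact Set.ncard_pair hedges
end
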